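/- arXiv:2202.11787 — 5 statements merged into one kernel-verified Lean document; each statement's English description precedes it below -/
import Mathlib

section
/- In the ring of symmetric functions, the chromatic symmetric function of the star graph on n+1 vertices satisfies st_{n+1} = Σ_{r=0}^{n} (−1)^r · C(n,r) · p_{r+1} · p₁^{n−r}, where p_k are the power sum symmetric functions. -/
/-- A coloring is proper if the two endpoints of each edge get distinct colors. -/
def IsProperColoring {V E C : Type*} (ends : E → Sym2 V) (κ : V → C) : Prop :=
  ∀ f : E, ¬ (Sym2.map κ (ends f)).IsDiag

/-- The chromatic symmetric function of a multigraph, as a formal power series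
in `x₀, x₁, …`: the coefficient of `∏ xᵢ^{d i}` is the number of proper
colorings `κ : V → ℕ` with exactly `d i` vertices of each color `i`. -/
noncomputable def csf {V E : Type*} [Fintype V] (ends : E → Sym2 V) :
    MvPowerSeries ℕ ℚ :=
  fun d => (Set.ncard {κ : V → ℕ | IsProperColoring ends κ ∧
    ∀ i : ℕ, d i = ∑ v : V, if κ v = i then 1 else 0} : ℚ)

/-- The power sum symmetric function `p_k = ∑_{i} x_i^k` as a power series. -/
noncomputable def pk (k : ℕ) : MvPowerSeries ℕ ℚ :=
  Set.indicator {d : ℕ →₀ ℕ | ∃ i : ℕ, d = Finsupp.single i k} (fun _ => (1 : ℚ))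

/-- The star graph `St_{n+1}`: center `0`, adjacent to the `n` leaves. -/
def starEnds (n : ℕ) : Fin n → Sym2 (Fin (n + 1)) :=
  fun i => s((0 : Fin (n + 1)), i.succ)

/-! Inclusion–exclusion over the set `t` of edges forced to be monochromatic writes `st_{n+1}`
as `∑_t (-1)^|t|` times the series of colorings that are constant on the center together with
the leaves of `t`. Such a coloring is one color for that block of `|t| + 1` vertices and a free
color for each of the other `n - |t|` leaves, so its series is `p_{|t|+1} p₁^{n-|t|}`; grouping
the sets `t` by size produces the binomial coefficients. -/

open Finset

theorem boole_forall_not_eq_sum_powerset {R E : Type*} [CommRing R] [DecidableEq E]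
    (s : Finset E) (p : E → Prop) [DecidablePred p] :
    (if ∀ e ∈ s, ¬ p e then 1 else 0 : R) =
      ∑ t ∈ s.powerset, (-1) ^ #t * if ∀ e ∈ t, p e then 1 else 0 :=
  calc (if ∀ e ∈ s, ¬ p e then 1 else 0 : R)
      = ∏ e ∈ s, (1 - if p e then 1 else 0) := by
        rw [← prod_boole]
        exact prod_congr rfl fun e _ => by split_ifs <;> simp
    _ = _ := by simp [prod_sub, prod_boole]

section WeightSeries

variable {σ A B : Type*}

/-- The generating series `∑ₐ x^(w a)` of a weight function. It is the intended one only when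
the fibres of `w` are finite: an infinite fibre contributes the junk coefficient `0`. -/
noncomputable def weightSeries (w : A → σ →₀ ℕ) : MvPowerSeries σ ℚ :=
  fun d => (Nat.card {a // w a = d} : ℚ)

theorem weightSeries_comp_equiv (e : A ≃ B) (w : B → σ →₀ ℕ) :
    weightSeries (w ∘ e) = weightSeries w := by
  funext d
  exact congrArg Nat.cast (Nat.card_congr (e.subtypeEquiv fun _ => Iff.rfl))

theorem weightSeries_subtype_congr {P Q : A → Prop} (h : ∀ a, P a ↔ Q a) (w : A → σ →₀ ℕ) :
    weightSeries (fun a : {a // P a} => w a) = weightSeries (fun a : {a // Q a} => w a) :=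
  weightSeries_comp_equiv (Equiv.subtypeEquivRight h) (fun a : {a // Q a} => w a)

theorem weightSeries_const_zero [Unique A] : weightSeries (fun _ : A => (0 : σ →₀ ℕ)) = 1 := by
  classical
  ext d
  rw [MvPowerSeries.coeff_one]
  change (Nat.card {_a : A // 0 = d} : ℚ) = _
  by_cases hd : d = 0
  · subst hd
    simp
  · simp [hd, Ne.symm hd]

theorem weightSeries_mul (u : A → σ →₀ ℕ) (v : B → σ →₀ ℕ)
    (hu : ∀ d, Finite {a // u a = d}) (hv : ∀ d, Finite {b // v b = d}) :
    weightSeries u * weightSeries v = weightSeries (fun p : A × B => u p.1 + v p.2) := by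
  classical
  ext d
  let e : {p : A × B // u p.1 + v p.2 = d} ≃
      Σ q : antidiagonal d, {a // u a = q.1.1} × {b // v b = q.1.2} :=
    { toFun p := ⟨⟨(u p.1.1, v p.1.2), mem_antidiagonal.2 p.2⟩, ⟨p.1.1, rfl⟩, ⟨p.1.2, rfl⟩⟩
      invFun x := ⟨(x.2.1.1, x.2.2.1), by rw [x.2.1.2, x.2.2.2]; exact mem_antidiagonal.1 x.1.2⟩
      left_inv p := rfl
      right_inv := by
        rintro ⟨⟨⟨q₁, q₂⟩, hq⟩, ⟨a, ha : u a = q₁⟩, ⟨b, hb : v b = q₂⟩⟩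
        subst ha hb
        rfl }
  rw [MvPowerSeries.coeff_mul]
  change _ = (Nat.card _ : ℚ)
  rw [Nat.card_congr e, Nat.card_sigma, Nat.cast_sum, ← Finset.sum_coe_sort]
  simp only [Nat.card_prod, Nat.cast_mul]
  rfl

theorem coeff_weightSeries_subtype (w : A → σ →₀ ℕ) (P : A → Prop) [DecidablePred P]
    (d : σ →₀ ℕ) [Fintype {a // w a = d}] :
    MvPowerSeries.coeff d (weightSeries (fun a : {a // P a} => w a)) =
      ∑ a : {a // w a = d}, if P a then 1 else 0 := by
  change (Nat.card {x : {a // P a} // w x = d} : ℚ) = _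
  rw [Finset.sum_boole, ← Fintype.card_subtype, ← Nat.card_eq_fintype_card]
  exact congrArg Nat.cast <| Nat.card_congr <|
    (Equiv.subtypeSubtypeEquivSubtypeInter P (w · = d)).trans
      ((Equiv.subtypeEquivRight fun _ => and_comm).trans
        (Equiv.subtypeSubtypeEquivSubtypeInter (w · = d) P).symm)

theorem weightSeries_subtype_forall_not {E : Type*} [Fintype E] (w : A → σ →₀ ℕ)
    (hw : ∀ d, Finite {a // w a = d}) (B : E → A → Prop) :
    weightSeries (fun a : {a // ∀ e, ¬ B e a} => w a) =
      ∑ t : Finset E, (-1 : ℚ) ^ #t • weightSeries (fun a : {a // ∀ e ∈ t, B e a} => w a) := by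
  classical
  ext d
  have := Fintype.ofFinite {a // w a = d}
  simp only [map_sum, MvPowerSeries.coeff_smul, coeff_weightSeries_subtype, mul_sum]
  rw [sum_comm]
  refine sum_congr rfl fun a _ => ?_
  simpa [← powerset_univ] using boole_forall_not_eq_sum_powerset (R := ℚ) univ (B · a)

end WeightSeries

/-- The exponent vector of the monomial `∏ᵥ x_{κ v}` of a coloring `κ`. -/
noncomputable def colorContent {V C : Type*} [Fintype V] (κ : V → C) : C →₀ ℕ :=
  ∑ v, Finsupp.single (κ v) 1

section ColorContent

variable {V W C : Type*} [Fintype V] [Fintype W]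

theorem colorContent_apply [DecidableEq C] (κ : V → C) (c : C) :
    colorContent κ c = ∑ v, if κ v = c then 1 else 0 := by
  simp [colorContent, Finsupp.finsetSum_apply, Finsupp.single_apply]

theorem colorContent_comp_equiv (e : V ≃ W) (κ : W → C) :
    colorContent (κ ∘ e) = colorContent κ :=
  e.sum_comp (fun w => Finsupp.single (κ w) 1)

theorem finite_colorContent_fiber (d : C →₀ ℕ) : Finite {κ : V → C // colorContent κ = d} := by
  classical
  have mem_support (κ : V → C) (hκ : colorContent κ = d) (v : V) : κ v ∈ d.support := by
    rw [Finsupp.mem_support_iff, ← hκ, colorContent_apply]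
    intro h
    simpa using (sum_eq_zero_iff.mp h) v (mem_univ v)
  exact Finite.of_injective (fun κ v => (⟨κ.1 v, mem_support κ.1 κ.2 v⟩ : d.support))
    fun κ κ' h => Subtype.ext <| funext fun v => congrArg Subtype.val (congrFun h v)

end ColorContent

theorem finite_single_fiber {k : ℕ} (hk : k ≠ 0) (d : ℕ →₀ ℕ) :
    Finite {i : ℕ // Finsupp.single i k = d} :=
  Finite.of_injective (fun _ => ()) fun i j _ =>
    Subtype.ext (Finsupp.single_left_injective hk (i.2.trans j.2.symm))

theorem pk_eq_weightSeries {k : ℕ} (hk : k ≠ 0) :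
    pk k = weightSeries (fun i : ℕ => Finsupp.single i k) := by
  ext d
  change pk k d = (Nat.card {i // Finsupp.single i k = d} : ℚ)
  unfold pk
  by_cases h : ∃ i, d = Finsupp.single i k
  · obtain ⟨i, rfl⟩ := h
    simp [Finsupp.single_left_inj hk]
  · have : IsEmpty {i // Finsupp.single i k = d} := ⟨fun i => h ⟨i, i.2.symm⟩⟩
    simp [h]

theorem pk_one_pow (m : ℕ) :
    pk 1 ^ m = weightSeries (colorContent : (Fin m → ℕ) → ℕ →₀ ℕ) := by
  induction m with
  | zero => exact (pow_zero _).trans weightSeries_const_zero.symm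
  | succ m ih =>
    rw [pow_succ', ih, pk_eq_weightSeries one_ne_zero,
      weightSeries_mul _ _ (finite_single_fiber one_ne_zero) finite_colorContent_fiber,
      ← weightSeries_comp_equiv (Fin.consEquiv fun _ => ℕ)]
    congr 1
    funext p
    simp [colorContent, Fin.sum_univ_succ]

theorem pk_one_pow_card (ι : Type*) [Fintype ι] :
    pk 1 ^ Fintype.card ι = weightSeries (colorContent : (ι → ℕ) → ℕ →₀ ℕ) := by
  rw [pk_one_pow, ← weightSeries_comp_equiv ((Fintype.equivFin ι).arrowCongr (Equiv.refl ℕ))]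
  congr 1
  funext κ
  exact colorContent_comp_equiv _ κ

theorem csf_eq_weightSeries {V E : Type*} [Fintype V] (ends : E → Sym2 V) :
    csf ends =
      weightSeries (fun κ : {κ : V → ℕ // IsProperColoring ends κ} => colorContent κ.1) := by
  classical
  ext d
  change (Set.ncard _ : ℚ) = (Nat.card {κ : {κ // IsProperColoring ends κ} // _} : ℚ)
  rw [← Nat.card_coe_set_eq]
  refine congrArg Nat.cast (Nat.card_congr ?_)
  refine (Equiv.subtypeEquivRight fun κ => and_congr_right fun _ => ?_).trans
    (Equiv.subtypeSubtypeEquivSubtypeInter (IsProperColoring ends) (colorContent · = d)).symm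
  simp only [Finsupp.ext_iff, colorContent_apply, eq_comm]

theorem csf_eq_sum_monochromatic {V E : Type*} [Fintype V] [Fintype E] (ends : E → Sym2 V) :
    csf ends = ∑ t : Finset E, (-1 : ℚ) ^ #t •
      weightSeries (fun κ : {κ : V → ℕ // ∀ e ∈ t, (Sym2.map κ (ends e)).IsDiag} =>
        colorContent κ.1) := by
  rw [csf_eq_weightSeries]
  exact weightSeries_subtype_forall_not colorContent finite_colorContent_fiber _

section ConstantOn

variable {V C : Type*} [Fintype V] [DecidableEq V] (S : Finset V) {v₀ : V}

def constOnEquiv (hv₀ : v₀ ∈ S) :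
    {κ : V → C // ∀ v ∈ S, κ v = κ v₀} ≃ C × ({v // v ∉ S} → C) where
  toFun κ := (κ.1 v₀, fun v => κ.1 v)
  invFun p := ⟨fun v => if h : v ∈ S then p.1 else p.2 ⟨v, h⟩, fun v hv => by simp [hv, hv₀]⟩
  left_inv κ := by
    ext v
    by_cases hv : v ∈ S <;> simp [hv, κ.2]
  right_inv p := by
    ext v
    · simp [hv₀]
    · simp [v.2]

theorem colorContent_eq_single_add {κ : V → C} {c : C} (h : ∀ v ∈ S, κ v = c) :
    colorContent κ = Finsupp.single c #S + colorContent (fun v : {v // v ∉ S} => κ v) := by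
  rw [colorContent, ← sum_add_sum_compl S, sum_congr rfl fun v hv => by rw [h v hv]]
  congr 1
  · simp [Finsupp.smul_single]
  · exact sum_subtype _ (fun _ => mem_compl) _

theorem weightSeries_constOn (hv₀ : v₀ ∈ S) :
    weightSeries (fun κ : {κ : V → ℕ // ∀ v ∈ S, κ v = κ v₀} => colorContent κ.1) =
      pk #S * pk 1 ^ (Fintype.card V - #S) := by
  have card_compl : Fintype.card {v // v ∉ S} = Fintype.card V - #S := by
    rw [Fintype.card_subtype_compl, Fintype.card_coe]
  rw [pk_eq_weightSeries (card_ne_zero_of_mem hv₀), ← card_compl, pk_one_pow_card,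
    weightSeries_mul _ _ (finite_single_fiber (card_ne_zero_of_mem hv₀)) finite_colorContent_fiber,
    ← weightSeries_comp_equiv (constOnEquiv S hv₀)]
  congr 1
  funext κ
  exact colorContent_eq_single_add S κ.2

end ConstantOn

theorem weightSeries_monochromatic_starEnds {n : ℕ} (t : Finset (Fin n)) :
    weightSeries (fun κ : {κ : Fin (n + 1) → ℕ // ∀ e ∈ t, (Sym2.map κ (starEnds n e)).IsDiag} =>
      colorContent κ.1) = pk (#t + 1) * pk 1 ^ (n - #t) := by
  have h0 : (0 : Fin (n + 1)) ∉ t.map (Fin.succEmb n) := by simp [Fin.succ_ne_zero]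
  rw [weightSeries_subtype_congr (Q := fun κ => ∀ v ∈ insert 0 (t.map (Fin.succEmb n)), κ v = κ 0),
    weightSeries_constOn _ (mem_insert_self _ _), card_insert_of_notMem h0, card_map,
    Fintype.card_fin, Nat.add_sub_add_right]
  intro κ
  simp only [starEnds, Sym2.map_mk, Sym2.mk_isDiag_iff, forall_mem_insert, forall_mem_map,
    Fin.coe_succEmb, eq_comm, true_and]

/-- `st_{n+1} = ∑_{r=0}^{n} (-1)^r C(n,r) p_{r+1} p₁^{n-r}`: the power sum
expansion of the chromatic symmetric function of the star on `n+1` vertices. -/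
theorem star_csf_powersum (n : ℕ) :
    csf (starEnds n) =
      ∑ r ∈ Finset.range (n + 1),
        ((-1 : ℚ) ^ r * (n.choose r : ℚ)) • (pk (r + 1) * pk 1 ^ (n - r)) := by
  simp only [csf_eq_sum_monochromatic, weightSeries_monochromatic_starEnds]
  rw [← powerset_univ,
    sum_powerset_apply_card (fun r => (-1 : ℚ) ^ r • (pk (r + 1) * pk 1 ^ (n - r))),
    card_univ, Fintype.card_fin]
  refine sum_congr rfl fun r _ => ?_
  rw [← Nat.cast_smul_eq_nsmul ℚ, smul_smul, mul_comm]
end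

section
/- The linear map on homogeneous symmetric functions of degree n determined by sending p_λ to st_λ (for each partition λ of n) is an involution; equivalently, p_{n+1} = Σ_{r=0}^{n} (−1)^r · C(n,r) · st_{r+1} · st₁^{n−r} given that st_{n+1} = Σ_{r=0}^{n} (−1)^r · C(n,r) · p_{r+1} · p₁^{n−r}. -/
/-!
Umbral proof. Let `L` be the `A`-linear functional on `A[X]` with `L (X ^ r) = p (r + 1)`
and put `a = p 1`. By the binomial theorem, the transform `p ↦ st` reads
`st (r + 1) = L ((a - X) ^ r)`; in particular `st 1 = a`. Applying the same identity to the
polynomial `a - X` in place of `X` shows that transforming `st` gives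
`L ((a - (a - X)) ^ n) = L (X ^ n) = p (n + 1)`.
-/

open Polynomial

namespace Polynomial

variable {A : Type*} [CommRing A]

noncomputable def momentFunctional (m : ℕ → A) : A[X] →ₗ[A] A :=
  lsum fun n => (LinearMap.id : A →ₗ[A] A).smulRight (m n)

@[simp]
theorem momentFunctional_X_pow (m : ℕ → A) (n : ℕ) : momentFunctional m (X ^ n) = m n := by
  simp [momentFunctional, X_pow_eq_monomial]

theorem sum_neg_one_pow_mul_choose_mul_map_pow (L : A[X] →ₗ[A] A) (P : A[X]) (a : A) (n : ℕ) :
    ∑ r ∈ Finset.range (n + 1), (-1 : A) ^ r * (n.choose r : A) * (L (P ^ r) * a ^ (n - r)) =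
      L ((C a - P) ^ n) := by
  rw [sub_eq_neg_add, add_pow, map_sum]
  refine Finset.sum_congr rfl fun r _ => ?_
  have hterm : (-P) ^ r * C a ^ (n - r) * (n.choose r : A[X]) =
      ((-1 : A) ^ r * (n.choose r : A) * a ^ (n - r)) • P ^ r := by
    rw [smul_eq_C_mul, neg_pow]
    simp only [map_mul, map_pow, map_neg, map_one, map_natCast]
    ring
  rw [hterm, map_smul, smul_eq_mul]
  ring

end Polynomial

/-- The linear map sending `p_λ` to `st_λ` is an involution: in any commutative
ring, if `st_{n+1} = ∑_{r=0}^{n} (-1)^r C(n,r) p_{r+1} p₁^{n-r}` for all `n`,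
then `p_{n+1} = ∑_{r=0}^{n} (-1)^r C(n,r) st_{r+1} st₁^{n-r}` for all `n`. -/
theorem p_st_involution {A : Type*} [CommRing A] (p st : ℕ → A)
    (h : ∀ n : ℕ, st (n + 1) = ∑ r ∈ Finset.range (n + 1),
        (-1 : A) ^ r * (n.choose r : A) * (p (r + 1) * p 1 ^ (n - r))) :
    ∀ n : ℕ, p (n + 1) = ∑ r ∈ Finset.range (n + 1),
        (-1 : A) ^ r * (n.choose r : A) * (st (r + 1) * st 1 ^ (n - r)) := by
  set L := momentFunctional fun r => p (r + 1)
  have hst : ∀ r, st (r + 1) = L ((C (p 1) - X) ^ r) := fun r => by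
    simp only [h r, ← sum_neg_one_pow_mul_choose_mul_map_pow, L, momentFunctional_X_pow]
  have hst1 : st 1 = p 1 := by rw [hst 0, pow_zero, ← pow_zero X, momentFunctional_X_pow]
  intro n
  rw [hst1]
  simp only [hst]
  rw [sum_neg_one_pow_mul_choose_mul_map_pow, sub_sub_cancel, momentFunctional_X_pow]
end

section
/- For any graph G on n vertices, the chromatic symmetric function satisfies X_G = Σ_{A ⊆ E(G)} (−1)^{|A|} p_{λ(A)}, where λ(A) is the partition of n recording the sizes of the connected components of the spanning subgraph (V(G), A). -/
/-- The setoid whose classes are the connected components of the spanning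
subgraph of a multigraph with edge set `A`. -/
def compSetoid {V E : Type*} (ends : E → Sym2 V) (A : Set E) : Setoid V :=
  Relation.EqvGen.setoid (fun x y => ∃ f ∈ A, ends f = s(x, y))

open Finset

section ColorCount

variable {V C : Type*} [Fintype V]

/-- The exponent vector of the monomial `∏ᵥ x_{κ v}`. -/
noncomputable def colorCount (κ : V → C) : C →₀ ℕ := ∑ v, Finsupp.single (κ v) 1

theorem colorCount_apply [DecidableEq C] (κ : V → C) (i : C) :
    colorCount κ i = #{v | κ v = i} := by
  simp only [colorCount, Finsupp.finsetSum_apply, Finsupp.single_apply, card_filter]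

theorem colorCount_eq_iff [DecidableEq C] (κ : V → C) (d : C →₀ ℕ) :
    colorCount κ = d ↔ ∀ i, d i = ∑ v, if κ v = i then 1 else 0 := by
  simp only [Finsupp.ext_iff, colorCount_apply, card_filter, eq_comm]

theorem finite_setOf_colorCount_eq (d : C →₀ ℕ) : {κ : V → C | colorCount κ = d}.Finite := by
  classical
  refine (Set.Finite.pi' fun _ => d.support.finite_toSet).subset ?_
  rintro κ rfl v
  simp [colorCount_apply]

theorem colorCount_comp {ι : Type*} [Fintype ι] [DecidableEq ι] (f : V → ι) (I : ι → C) :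
    colorCount (I ∘ f) = ∑ c, Finsupp.single (I c) (Nat.card {x // f x = c}) := by
  rw [colorCount, ← sum_fiberwise univ f]
  refine sum_congr rfl fun c _ => ?_
  rw [sum_congr rfl fun v hv => by rw [Function.comp_apply, (mem_filter.1 hv).2]]
  simp [Nat.card_eq_fintype_card, Fintype.card_subtype]

end ColorCount

theorem ncard_setOf_le_ker_and {V C : Type*} (s : Setoid V) (P : (V → C) → Prop) :
    {κ : V → C | s ≤ Setoid.ker κ ∧ P κ}.ncard =
      {I : Quotient s → C | P (I ∘ Quotient.mk s)}.ncard := by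
  have himage : {κ : V → C | s ≤ Setoid.ker κ ∧ P κ} =
      (· ∘ Quotient.mk s) '' {I | P (I ∘ Quotient.mk s)} := by
    ext κ
    constructor
    · rintro ⟨hκ, hP⟩
      exact ⟨Quotient.lift κ fun _ _ h => hκ h, hP, rfl⟩
    · rintro ⟨I, hP, rfl⟩
      exact ⟨fun _ _ h => congrArg I (Quotient.sound h), hP⟩
  rw [himage, Set.ncard_image_of_injective _ Quotient.mk_surjective.injective_comp_right]

open Classical in
theorem coeff_pk (k : ℕ) (d : ℕ →₀ ℕ) :
    MvPowerSeries.coeff d (pk k) = if ∃ i, d = Finsupp.single i k then 1 else 0 := by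
  rw [MvPowerSeries.coeff_apply, pk, Set.indicator_apply]
  rfl

theorem coeff_prod_pk {ι : Type*} [Fintype ι] {m : ι → ℕ} (hm : ∀ c, m c ≠ 0)
    (d : ℕ →₀ ℕ) :
    MvPowerSeries.coeff d (∏ c, pk (m c)) =
      {I : ι → ℕ | ∑ c, Finsupp.single (I c) (m c) = d}.ncard := by
  classical
  rw [MvPowerSeries.coeff_prod]
  simp only [coeff_pk, Fintype.prod_boole, sum_boole]
  norm_cast
  rw [← Set.ncard_coe_finset]
  symm
  refine Set.ncard_congr
    (fun I _ => Finsupp.equivFunOnFinite.symm fun c => Finsupp.single (I c) (m c)) ?_ ?_ ?_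
  · intro I hI
    simpa [mem_finsuppAntidiag] using ⟨hI, fun c => ⟨I c, rfl⟩⟩
  · intro I J _ _ h
    funext c
    exact (Finsupp.single_left_inj (hm c)).1 (DFunLike.congr_fun h c)
  · intro l hl
    obtain ⟨hsum, hsingle⟩ := mem_filter.1 hl
    choose I hI using hsingle
    refine ⟨I, ?_, ?_⟩
    · simpa [mem_finsuppAntidiag, ← hI] using hsum
    · ext c : 1
      simp [hI]

theorem coeff_finprod_pk_classes {V : Type*} [Fintype V] (s : Setoid V) (d : ℕ →₀ ℕ) :
    MvPowerSeries.coeff d (∏ᶠ c : Quotient s, pk (Nat.card {x // Quotient.mk s x = c})) =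
      {κ : V → ℕ | s ≤ Setoid.ker κ ∧ colorCount κ = d}.ncard := by
  classical
  have : Fintype (Quotient s) := Fintype.ofFinite _
  have hclass : ∀ c : Quotient s, Nat.card {x // Quotient.mk s x = c} ≠ 0 := fun c =>
    have : Nonempty {x // Quotient.mk s x = c} := ⟨⟨c.out, c.out_eq⟩⟩
    Nat.card_pos.ne'
  rw [finprod_eq_prod_of_fintype, coeff_prod_pk hclass, ncard_setOf_le_ker_and]
  simp_rw [colorCount_comp]

theorem compSetoid_le_ker_iff {V E C : Type*} (ends : E → Sym2 V) (A : Set E) (κ : V → C) :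
    compSetoid ends A ≤ Setoid.ker κ ↔ ∀ f ∈ A, (Sym2.map κ (ends f)).IsDiag := by
  rw [compSetoid, Setoid.gi.gc.le_iff_le]
  constructor
  · intro h f hf
    induction hxy : ends f using Sym2.ind with
    | h x y => simpa [Sym2.mk_isDiag_iff] using h x y ⟨f, hf, hxy⟩
  · rintro h x y ⟨f, hf, hxy⟩
    simpa [hxy, Sym2.mk_isDiag_iff] using h f hf

theorem sum_neg_one_pow_mul_card_filter_subset {α E R : Type*} [Fintype E] [DecidableEq E]
    [CommRing R] (T : Finset α) (M : α → Finset E) :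
    ∑ A : Finset E, (-1 : R) ^ #A * #{κ ∈ T | A ⊆ M κ} = #{κ ∈ T | M κ = ∅} := by
  simp_rw [card_filter, Nat.cast_sum, mul_sum, Nat.cast_ite, Nat.cast_one, Nat.cast_zero,
    mul_ite, mul_one, mul_zero]
  rw [sum_comm]
  refine sum_congr rfl fun κ _ => ?_
  have := congrArg (Int.cast : ℤ → R) (sum_powerset_neg_one_pow_card (x := M κ))
  push_cast at this
  rw [← sum_filter, filter_subset_univ, this]

theorem coeff_csf {V E : Type*} [Fintype V] (ends : E → Sym2 V) (d : ℕ →₀ ℕ) :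
    MvPowerSeries.coeff d (csf ends) =
      {κ : V → ℕ | IsProperColoring ends κ ∧ colorCount κ = d}.ncard := by
  simp only [MvPowerSeries.coeff_apply, csf, colorCount_eq_iff]

/-- Stanley's power sum expansion:
`X_G = ∑_{A ⊆ E} (-1)^{|A|} p_{λ(A)}`, where `λ(A)` records the sizes of the
connected components of the spanning subgraph with edge set `A`. -/
theorem csf_powersum_expansion {V E : Type*} [Fintype V] [Fintype E]
    (ends : E → Sym2 V) :
    csf ends =
      ∑ A : Finset E, ((-1 : ℚ) ^ A.card) •
        ∏ᶠ c : Quotient (compSetoid ends (↑A : Set E)),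
          pk (Nat.card {x : V // Quotient.mk (compSetoid ends ↑A) x = c}) := by
  classical
  ext d
  set T := (finite_setOf_colorCount_eq (V := V) d).toFinset
  have ncard_eq (P : (V → ℕ) → Prop) [DecidablePred P] :
      ({κ | P κ ∧ colorCount κ = d}.ncard : ℚ) = #{κ ∈ T | P κ} := by
    rw [← Set.ncard_coe_finset]
    congr 2
    ext κ
    simp [T, and_comm]
  let monochromatic (κ : V → ℕ) : Finset E := {f | (Sym2.map κ (ends f)).IsDiag}
  calc MvPowerSeries.coeff d (csf ends) = #{κ ∈ T | monochromatic κ = ∅} := by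
        rw [coeff_csf, ncard_eq]
        congr 2
        refine filter_congr fun κ _ => ?_
        simp [IsProperColoring, monochromatic, filter_eq_empty_iff]
    _ = ∑ A : Finset E, (-1 : ℚ) ^ #A * #{κ ∈ T | A ⊆ monochromatic κ} :=
        (sum_neg_one_pow_mul_card_filter_subset T monochromatic).symm
    _ = _ := by
        rw [map_sum]
        refine sum_congr rfl fun A _ => ?_
        rw [map_smul, smul_eq_mul, coeff_finprod_pk_classes, ncard_eq]
        simp [compSetoid_le_ker_iff, subset_iff, monochromatic]
end

section
/- The weighted chromatic symmetric function satisfies deletion-contraction: for any weighted graph (G,ω) and any edge e of G, X_{(G,ω)} = X_{(G∖e, ω)} − X_{(G/e, ω/e)}. -/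
/-- The weighted chromatic symmetric function of a weighted multigraph, as a
formal power series in the variables `x₀, x₁, x₂, …`: the coefficient of the
monomial `∏ xᵢ^{d i}` is the number of proper colorings `κ : V → ℕ` such that
for every color `i`, the total weight of the vertices colored `i` is `d i`. -/
noncomputable def wcsf {V E : Type*} [Fintype V] (ends : E → Sym2 V) (ω : V → ℕ) :
    MvPowerSeries ℕ ℚ :=
  fun d => (Set.ncard {κ : V → ℕ | IsProperColoring ends κ ∧
    ∀ i : ℕ, d i = ∑ v : V, if κ v = i then ω v else 0} : ℚ)

open Finset

section Coloring

variable {V W E C : Type*}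

theorem isProperColoring_map_iff (ends : E → Sym2 V) (g : V → W) (κ : W → C) :
    IsProperColoring (fun f => Sym2.map g (ends f)) κ ↔ IsProperColoring ends (κ ∘ g) := by
  simp only [IsProperColoring, Sym2.map_map]

theorem isProperColoring_iff_of_ends_eq (ends : E → Sym2 V) {e : E} {u v : V}
    (he : ends e = s(u, v)) (κ : V → C) :
    IsProperColoring ends κ ↔
      IsProperColoring (fun f : {f : E // f ≠ e} => ends f.1) κ ∧ κ u ≠ κ v := by
  have hκe : ¬ (Sym2.map κ (ends e)).IsDiag ↔ κ u ≠ κ v := by simp [he]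
  refine ⟨fun h => ⟨fun f => h f.1, hκe.1 (h e)⟩, fun ⟨h, huv⟩ f => ?_⟩
  by_cases hf : f = e
  · exact hf ▸ hκe.2 huv
  · exact h ⟨f, hf⟩

end Coloring

section Weight

variable {V W E : Type*} [Fintype V]

def colorWeight (ω : V → ℕ) (κ : V → ℕ) (i : ℕ) : ℕ :=
  ∑ x, if κ x = i then ω x else 0

theorem le_colorWeight (ω : V → ℕ) (κ : V → ℕ) (x : V) : ω x ≤ colorWeight ω κ (κ x) := by
  have := Finset.single_le_sum (f := fun y => if κ y = κ x then ω y else 0)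
    (fun _ _ => Nat.zero_le _) (Finset.mem_univ x)
  simpa [colorWeight] using this

theorem colorWeight_comp [Fintype W] [DecidableEq W] (g : V → W) {ω : V → ℕ} {ω' : W → ℕ}
    (hω' : ∀ y, ω' y = ∑ x with g x = y, ω x) (κ : W → ℕ) :
    colorWeight ω' κ = colorWeight ω (κ ∘ g) := by
  funext i
  simp only [colorWeight, hω', Function.comp_apply]
  rw [← Finset.sum_fiberwise univ g]
  refine Finset.sum_congr rfl fun y _ => ?_
  split_ifs with hy
  · exact Finset.sum_congr rfl fun x hx => by rw [if_pos ((mem_filter.1 hx).2 ▸ hy)]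
  · exact (Finset.sum_eq_zero fun x hx => by rw [if_neg ((mem_filter.1 hx).2 ▸ hy)]).symm

def weightedProperColorings (ends : E → Sym2 V) (ω : V → ℕ) (d : ℕ →₀ ℕ) : Set (V → ℕ) :=
  {κ | IsProperColoring ends κ ∧ ∀ i, d i = colorWeight ω κ i}

theorem wcsf_apply (ends : E → Sym2 V) (ω : V → ℕ) (d : ℕ →₀ ℕ) :
    wcsf ends ω d = (weightedProperColorings ends ω d).ncard :=
  rfl

theorem weightedProperColorings_finite (ends : E → Sym2 V) {ω : V → ℕ} (hω : ∀ x, 0 < ω x)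
    (d : ℕ →₀ ℕ) : (weightedProperColorings ends ω d).Finite := by
  refine (Set.Finite.pi fun _ : V => d.support.finite_toSet).subset ?_
  rintro κ ⟨-, hκ⟩ x -
  have := le_colorWeight ω κ x
  have := hω x
  simp only [Finset.mem_coe, Finsupp.mem_support_iff, hκ]
  omega

theorem weightedProperColorings_map [Fintype W] [DecidableEq W] (ends : E → Sym2 V) (g : V → W)
    {ω : V → ℕ} {ω' : W → ℕ} (hω' : ∀ y, ω' y = ∑ x with g x = y, ω x) (d : ℕ →₀ ℕ) :
    weightedProperColorings (fun f => Sym2.map g (ends f)) ω' d =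
      (· ∘ g) ⁻¹' weightedProperColorings ends ω d := by
  ext κ
  simp only [weightedProperColorings, Set.mem_ofPred_eq, Set.mem_preimage,
    isProperColoring_map_iff, colorWeight_comp g hω']

theorem weightedProperColorings_eq_sdiff (ends : E → Sym2 V) {e : E} {u v : V}
    (he : ends e = s(u, v)) (ω : V → ℕ) (d : ℕ →₀ ℕ) :
    weightedProperColorings ends ω d =
      weightedProperColorings (fun f : {f : E // f ≠ e} => ends f.1) ω d \ {κ | κ u = κ v} := by
  ext κ
  simp only [weightedProperColorings, Set.mem_sdiff, Set.mem_ofPred_eq,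
    isProperColoring_iff_of_ends_eq ends he]
  tauto

end Weight

section Merge

variable {V : Type*} [DecidableEq V] {u v : V}

def mergeVertex (huv : u ≠ v) (x : V) : {x : V // x ≠ u} :=
  if h : x = u then ⟨v, huv.symm⟩ else ⟨x, h⟩

theorem mergeVertex_eq_iff (huv : u ≠ v) (x : V) (y : {x : V // x ≠ u}) :
    mergeVertex huv x = y ↔ x = y.1 ∨ (x = u ∧ y.1 = v) := by
  obtain ⟨y, hy⟩ := y
  unfold mergeVertex
  split_ifs with hx
  · subst hx
    simp [Subtype.ext_iff, eq_comm, hy.symm]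
  · simp [Subtype.ext_iff, hx]

theorem mergeVertex_surjective (huv : u ≠ v) : Function.Surjective (mergeVertex huv) :=
  fun y => ⟨y.1, (mergeVertex_eq_iff huv _ _).2 (Or.inl rfl)⟩

theorem range_comp_mergeVertex {C : Type*} (huv : u ≠ v) :
    Set.range (fun κ : {x : V // x ≠ u} → C => κ ∘ mergeVertex huv) = {κ | κ u = κ v} := by
  ext κ
  constructor
  · rintro ⟨κ', rfl⟩
    simp [mergeVertex, huv.symm]
  · intro (h : κ u = κ v)
    refine ⟨fun x => κ x.1, funext fun x => ?_⟩
    by_cases hx : x = u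
    · subst hx
      simpa [mergeVertex] using h.symm
    · simp [mergeVertex, hx]

theorem sum_fiber_mergeVertex [Fintype V] (huv : u ≠ v) (ω : V → ℕ) (y : {x : V // x ≠ u}) :
    ∑ x with mergeVertex huv x = y, ω x = if y.1 = v then ω u + ω v else ω y.1 := by
  simp only [mergeVertex_eq_iff]
  split_ifs with hy
  · rw [show (univ.filter fun x => x = y.1 ∨ x = u ∧ y.1 = v) = {u, v} by ext; simp [hy, or_comm],
      sum_pair huv]
  · simp only [hy, and_false, or_false, filter_eq', if_pos (mem_univ _), sum_singleton]

end Merge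

theorem ncard_weightedProperColorings_add_ncard_contract {V E : Type*} [Fintype V]
    [DecidableEq V] (ends : E → Sym2 V) {ω : V → ℕ} (hω : ∀ x, 0 < ω x) {e : E} {u v : V}
    (he : ends e = s(u, v)) (huv : u ≠ v) (d : ℕ →₀ ℕ) :
    (weightedProperColorings ends ω d).ncard +
      (weightedProperColorings (fun f : {f : E // f ≠ e} => Sym2.map (mergeVertex huv) (ends f.1))
        (fun x : {x : V // x ≠ u} => if x.1 = v then ω u + ω v else ω x.1) d).ncard =
      (weightedProperColorings (fun f : {f : E // f ≠ e} => ends f.1) ω d).ncard := by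
  rw [weightedProperColorings_eq_sdiff ends he,
    weightedProperColorings_map _ _ fun y => (sum_fiber_mergeVertex huv ω y).symm,
    ← Set.ncard_image_of_injective _ (mergeVertex_surjective huv).injective_comp_right,
    Set.image_preimage_eq_inter_range, range_comp_mergeVertex huv, add_comm]
  exact Set.ncard_inter_add_ncard_sdiff_eq_ncard _ _ (weightedProperColorings_finite _ hω d)

/-- Deletion-contraction for the weighted chromatic symmetric function:
`X_{(G,ω)} = X_{(G∖e,ω)} - X_{(G/e,ω/e)}` for a non-loop edge `e` with
endpoints `u ≠ v`.  The contraction has vertex set `{x // x ≠ u}`, the edge `e`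
removed, endpoints transported by merging `u` into `v`, and the weight of the
merged vertex is `ω u + ω v`. -/
theorem wcsf_deletion_contraction {V E : Type*} [Fintype V] [DecidableEq V]
    (ends : E → Sym2 V) (ω : V → ℕ) (hω : ∀ x, 0 < ω x)
    (e : E) (u v : V) (he : ends e = s(u, v)) (huv : u ≠ v) :
    wcsf ends ω =
      wcsf (fun f : {f : E // f ≠ e} => ends f.1) ω -
      wcsf (fun f : {f : E // f ≠ e} =>
          Sym2.map (fun x : V =>
            if h : x = u then (⟨v, huv.symm⟩ : {x : V // x ≠ u}) else ⟨x, h⟩)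
            (ends f.1))
        (fun x : {x : V // x ≠ u} => if x.1 = v then ω u + ω v else ω x.1) := by
  funext d
  show wcsf _ _ d = wcsf _ _ d -
    wcsf (fun f : {f : E // f ≠ e} => Sym2.map (mergeVertex huv) (ends f.1)) _ d
  rw [wcsf_apply, wcsf_apply, wcsf_apply,
    ← ncard_weightedProperColorings_add_ncard_contract ends hω he huv d]
  push_cast
  ring
end

section
/- Let T be a forest with n vertices and let M_{(T,m)}(z) = Σ_{A ⊆ E(T)} z_{λ(T,m,A)} be the states-model expansion of its marked polynomial, where all marks m(v) are strict (w > d+1). Then substituting z_{w,d} ↦ D_{w,d} := Σ_{i=0}^{d} (−1)^i C(d,i) z_{w−i,0} z_{1,0}^i yields an expression in which the total number of monomials (counted with multiplicity, before any cancellation) is 3^{n−1}, and no cancellations occur: all monomials containing z_{1,0}^ℓ have sign (−1)^ℓ. -/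
open MvPolynomial

/-- The undotting substitution: the variable `z_{(w,d)}` is sent to
`D_{w,d} = ∑_{i=0}^{d} (-1)^i C(d,i) z_{(w-i,0)} z_{(1,0)}^i`. -/
noncomputable def undot (p : ℕ × ℕ) : MvPolynomial (ℕ × ℕ) ℚ :=
  ∑ i ∈ Finset.range (p.2 + 1),
    ((-1 : ℚ) ^ i * (p.2.choose i : ℚ)) • (X (p.1 - i, 0) * X (1, 0) ^ i)

/-- The states-model expansion of the `M`-polynomial of a marked graph:
`M_{(G,m)}(z) = ∑_{A ⊆ E(G)} z_{λ(G,m,A)}`, where `λ(G,m,A)` is the multiset of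
total marks (dot-sums) of the connected components of the spanning subgraph
with edge set `A`; a component with vertex set `S` has total mark
`(∑_{x∈S} w_x, ∑_{x∈S} d_x + (|S| - 1))`. -/
noncomputable def Mpoly {V : Type*} [Fintype V] [DecidableEq V]
    (G : SimpleGraph V) [DecidableRel G.Adj] (m : V → ℕ × ℕ) :
    MvPolynomial (ℕ × ℕ) ℚ :=
  ∑ A ∈ G.edgeFinset.powerset,
    ∏ᶠ c : (SimpleGraph.fromEdgeSet (↑A : Set (Sym2 V))).ConnectedComponent,
      X ((∑ᶠ x ∈ c.supp, (m x).1),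
         (∑ᶠ x ∈ c.supp, (m x).2) + (Nat.card c.supp - 1))

/-!
Under `z_{w,d} ↦ D_{w,d}` the variable of a component with `k` vertices becomes
`∑_i (-1)^i C(k-1,i) z_{w-i,0} z_{1,0}^i`, and strictness gives `w - i ≠ 1`, so the sign of each
term is `(-1)` to its power of `z_{1,0}`. This sign pattern survives sums and products, so no
cancellation occurs, and the sum of the absolute values of the coefficients is the value at
`z_{1,0} = -1`, all other variables `1`. There `D_{w,k-1}` becomes `2^(k-1)`; in a forest the
exponents `k - 1` add up over the components of `T|_A` to `|A|`, so the total is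
`∑_{A ⊆ E} 2^|A| = 3^|E| = 3^(n-1)`.
-/

open Finset

namespace MvPolynomial

variable {σ R : Type*} [CommRing R] [LinearOrder R]

def HasAlternatingSigns (s : σ) (p : MvPolynomial σ R) : Prop :=
  ∀ μ : σ →₀ ℕ, 0 ≤ (-1 : R) ^ μ s * p.coeff μ

namespace HasAlternatingSigns

variable {s : σ}

theorem monomial {μ : σ →₀ ℕ} {a : R} (h : 0 ≤ (-1 : R) ^ μ s * a) :
    HasAlternatingSigns s (monomial μ a) := by
  classical
  intro ν
  rw [coeff_monomial]
  split_ifs with hμν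
  · exact hμν ▸ h
  · simp

variable [IsStrictOrderedRing R]

theorem one : HasAlternatingSigns s (1 : MvPolynomial σ R) :=
  monomial (by simp)

theorem mul {p q : MvPolynomial σ R} (hp : HasAlternatingSigns s p)
    (hq : HasAlternatingSigns s q) : HasAlternatingSigns s (p * q) := by
  classical
  intro μ
  rw [coeff_mul, mul_sum]
  refine sum_nonneg fun ab hab => ?_
  rw [← HasAntidiagonal.mem_antidiagonal.mp hab, Finsupp.add_apply, pow_add]
  calc (0 : R) ≤ (-1) ^ ab.1 s * p.coeff ab.1 * ((-1) ^ ab.2 s * q.coeff ab.2) :=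
        mul_nonneg (hp _) (hq _)
    _ = _ := by ring

theorem sum {ι : Type*} {t : Finset ι} {f : ι → MvPolynomial σ R}
    (h : ∀ i ∈ t, HasAlternatingSigns s (f i)) : HasAlternatingSigns s (∑ i ∈ t, f i) := by
  intro μ
  rw [coeff_sum, mul_sum]
  exact sum_nonneg fun i hi => h i hi μ

theorem prod {ι : Type*} {t : Finset ι} {f : ι → MvPolynomial σ R}
    (h : ∀ i ∈ t, HasAlternatingSigns s (f i)) : HasAlternatingSigns s (∏ i ∈ t, f i) :=
  prod_induction f _ (fun _ _ => mul) one h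

theorem pos_of_mem_support {p : MvPolynomial σ R} (hp : HasAlternatingSigns s p)
    {μ : σ →₀ ℕ} (hμ : μ ∈ p.support) : 0 < (-1 : R) ^ μ s * p.coeff μ :=
  (hp μ).lt_of_ne' (mul_ne_zero (pow_ne_zero _ (neg_ne_zero.mpr one_ne_zero))
    (mem_support_iff.mp hμ))

theorem sum_abs_coeff_eq_aeval [DecidableEq σ] {p : MvPolynomial σ R}
    (hp : HasAlternatingSigns s p) :
    ∑ μ ∈ p.support, |p.coeff μ| = aeval (Pi.mulSingle s (-1 : R)) p := by
  rw [aeval_eq_eval, eval_eq]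
  refine sum_congr rfl fun μ _ => ?_
  have hsign :
      ∏ n ∈ μ.support, (Pi.mulSingle s (-1 : R) : σ → R) n ^ μ n = (-1) ^ μ s := by
    rw [prod_eq_single s (fun n _ hn => by simp [hn])
      (fun hs => by simp [Finsupp.notMem_support_iff.mp hs])]
    simp
  rw [hsign, mul_comm, ← abs_of_nonneg (hp μ), abs_mul, abs_pow, abs_neg, abs_one, one_pow,
    one_mul]

end HasAlternatingSigns

end MvPolynomial

theorem Set.ncard_lt_finsum_mem {α : Type*} {s : Set α} {f : α → ℕ} (hs : s.Finite)
    (hne : s.Nonempty) (hf : ∀ x ∈ s, 1 < f x) : s.ncard < ∑ᶠ x ∈ s, f x := by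
  rw [← finsum_one, finsum_mem_eq_finite_toFinset_sum _ hs,
    finsum_mem_eq_finite_toFinset_sum _ hs]
  exact sum_lt_sum_of_nonempty (hs.toFinset_nonempty.mpr hne)
    fun x hx => hf x (hs.mem_toFinset.mp hx)

namespace SimpleGraph

variable {V : Type*} {G : SimpleGraph V} {u v : V}

theorem Reachable.of_sup_edge {x y : V} (h : (G ⊔ edge u v).Reachable x y) :
    G.Reachable x y ∨ (G.Reachable x u ∧ G.Reachable v y) ∨
      (G.Reachable x v ∧ G.Reachable u y) := by
  obtain ⟨p⟩ := h
  induction p with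
  | nil => exact Or.inl .rfl
  | @cons a b c hab p ih =>
    rcases (sup_adj _ _ _ _).mp hab with hG | hE
    · exact ih.imp hG.reachable.trans (Or.imp (And.imp_left hG.reachable.trans)
        (And.imp_left hG.reachable.trans))
    · obtain ⟨⟨rfl, rfl⟩ | ⟨rfl, rfl⟩, -⟩ := (edge_adj ..).mp hE
      · rcases ih with h | ⟨h₁, h₂⟩ | ⟨-, h₂⟩
        · exact Or.inr (Or.inl ⟨.rfl, h⟩)
        · exact Or.inl (h₁.symm.trans h₂)
        · exact Or.inl h₂
      · rcases ih with h | ⟨-, h₂⟩ | ⟨h₁, h₂⟩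
        · exact Or.inr (Or.inr ⟨.rfl, h⟩)
        · exact Or.inl h₂
        · exact Or.inl (h₁.symm.trans h₂)

theorem card_connectedComponent_sup_edge [Finite V] (h : ¬G.Reachable u v) :
    Nat.card G.ConnectedComponent = Nat.card (G ⊔ edge u v).ConnectedComponent + 1 := by
  have hne : u ≠ v := fun huv => h (huv ▸ .rfl)
  have huv : (G ⊔ edge u v).Reachable u v :=
    Adj.reachable (by simp [edge_adj, hne])
  let f (c : {c : G.ConnectedComponent // c ≠ G.connectedComponentMk v}) :
      (G ⊔ edge u v).ConnectedComponent :=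
    c.1.map (Hom.ofLE le_sup_left)
  have hf : f.Bijective := by
    constructor
    · rintro ⟨c₁, h₁⟩ ⟨c₂, h₂⟩ heq
      obtain ⟨x, rfl⟩ := c₁.exists_rep
      obtain ⟨y, rfl⟩ := c₂.exists_rep
      rcases (ConnectedComponent.exact heq).of_sup_edge with hxy | ⟨-, hvy⟩ | ⟨hxv, -⟩
      · exact Subtype.ext (ConnectedComponent.sound hxy)
      · exact absurd (ConnectedComponent.sound hvy.symm) h₂
      · exact absurd (ConnectedComponent.sound hxv) h₁
    · intro c'
      obtain ⟨x, rfl⟩ := c'.exists_rep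
      by_cases hx : G.connectedComponentMk x = G.connectedComponentMk v
      · refine ⟨⟨G.connectedComponentMk u, fun hu => h (ConnectedComponent.exact hu)⟩, ?_⟩
        exact ConnectedComponent.sound
          (huv.trans ((ConnectedComponent.exact hx).mono le_sup_left).symm)
      · exact ⟨⟨_, hx⟩, rfl⟩
  have hcompl :
      Nat.card {c // c ≠ G.connectedComponentMk v} + 1 = Nat.card G.ConnectedComponent := by
    rw [← Set.ncard_add_ncard_compl {G.connectedComponentMk v}, Set.ncard_singleton, add_comm,
      ← Nat.card_coe_set_eq]
    rfl
  rw [← hcompl, Nat.card_eq_of_bijective f hf]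

theorem ConnectedComponent.nat_card_supp_pos [Finite V] (c : G.ConnectedComponent) :
    0 < Nat.card c.supp :=
  Nat.card_pos_iff.mpr ⟨c.nonempty_supp.to_subtype, inferInstance⟩

theorem ConnectedComponent.card_supp_sub_one_add_one_lt_finsum [Finite V]
    (c : G.ConnectedComponent) {f : V → ℕ} (hf : ∀ x, 1 < f x) :
    Nat.card c.supp - 1 + 1 < ∑ᶠ x ∈ c.supp, f x := by
  rw [Nat.sub_add_cancel c.nat_card_supp_pos, Nat.card_coe_set_eq]
  exact Set.ncard_lt_finsum_mem (Set.toFinite _) c.nonempty_supp fun x _ => hf x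

theorem nat_card_connectedComponent_bot :
    Nat.card (⊥ : SimpleGraph V).ConnectedComponent = Nat.card V :=
  (Nat.card_eq_of_bijective _ ⟨fun _ _ h => reachable_bot.mp (ConnectedComponent.exact h),
    fun c => c.exists_rep⟩).symm

theorem card_connectedComponent_fromEdgeSet_add_card [Fintype V] [DecidableEq V]
    {s : Finset (Sym2 V)} (hs : (fromEdgeSet (s : Set (Sym2 V))).IsAcyclic)
    (hdiag : ∀ e ∈ s, ¬e.IsDiag) :
    Nat.card (fromEdgeSet (s : Set (Sym2 V))).ConnectedComponent + #s = Fintype.card V := by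
  induction s using Finset.induction_on with
  | empty =>
    rw [coe_empty, fromEdgeSet_empty, card_empty, add_zero, nat_card_connectedComponent_bot,
      Nat.card_eq_fintype_card]
  | @insert e t he ih =>
    induction e using Sym2.ind with | _ u v => ?_
    have hne : u ≠ v := by simpa using hdiag _ (mem_insert_self _ _)
    have hsup : fromEdgeSet ↑(insert s(u, v) t) = fromEdgeSet ↑t ⊔ edge u v := by
      rw [coe_insert, Set.insert_eq, fromEdgeSet_union, sup_comm]
      rfl
    rw [hsup] at hs ⊢
    obtain ⟨ht, hreach⟩ := isAcyclic_sup_fromEdgeSet_iff.mp hs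
    have hnr : ¬(fromEdgeSet ↑t).Reachable u v := fun h =>
      (hreach h).elim hne fun hadj => he ((fromEdgeSet_adj ..).mp hadj).1
    rw [card_insert_of_notMem he, ← ih ht (fun e he => hdiag e (mem_insert_of_mem he)),
      card_connectedComponent_sup_edge hnr]
    ring

theorem sum_nat_card_supp [Fintype V] [Fintype G.ConnectedComponent] :
    ∑ c : G.ConnectedComponent, Nat.card c.supp = Fintype.card V := by
  rw [← Nat.card_sigma, ← Nat.card_eq_fintype_card]
  exact Nat.card_congr (Equiv.sigmaFiberEquiv G.connectedComponentMk)

theorem IsAcyclic.sum_card_supp_sub_one_fromEdgeSet [Fintype V] [DecidableEq V]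
    (hG : G.IsAcyclic) {A : Finset (Sym2 V)} (hA : (A : Set (Sym2 V)) ⊆ G.edgeSet) :
    ∑ c : (fromEdgeSet (A : Set (Sym2 V))).ConnectedComponent, (Nat.card c.supp - 1) = #A := by
  have hcard := card_connectedComponent_fromEdgeSet_add_card
    (hG.anti ((fromEdgeSet_mono hA).trans_eq (fromEdgeSet_edgeSet G)))
    (fun e he => G.not_isDiag_of_mem_edgeSet (hA he))
  rw [sum_tsub_distrib _ fun c _ => c.nat_card_supp_pos,
    sum_nat_card_supp, sum_const, card_univ, smul_eq_mul, mul_one]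
  rw [Nat.card_eq_fintype_card] at hcard
  omega

end SimpleGraph

theorem undot_hasAlternatingSigns {w d : ℕ} (h : d + 1 < w) :
    HasAlternatingSigns (1, 0) (undot (w, d)) := by
  refine HasAlternatingSigns.sum fun i hi => ?_
  have hne : (w - i, 0) ≠ (1, 0) := by simp at hi ⊢; omega
  rw [smul_eq_C_mul, X, X_pow_eq_monomial, monomial_mul, C_mul_monomial]
  refine HasAlternatingSigns.monomial ?_
  rw [Finsupp.add_apply, Finsupp.single_eq_of_ne' hne, Finsupp.single_eq_same, zero_add]
  simp only [mul_one, ← mul_assoc, ← mul_pow]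
  norm_num

theorem aeval_undot {w d : ℕ} (h : d + 1 < w) :
    aeval (Pi.mulSingle (1, 0) (-1 : ℚ)) (undot (w, d)) = 2 ^ d := by
  calc aeval (Pi.mulSingle (1, 0) (-1 : ℚ)) (undot (w, d))
      = ∑ i ∈ range (d + 1), (d.choose i : ℚ) := by
        rw [undot, map_sum]
        refine sum_congr rfl fun i hi => ?_
        have hne : (w - i, 0) ≠ (1, 0) := by simp at hi ⊢; omega
        simp only [map_smul, map_mul, map_pow, aeval_X, Pi.mulSingle_eq_same,
          Pi.mulSingle_eq_of_ne hne]
        rw [smul_eq_mul, one_mul, mul_right_comm, ← mul_pow]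
        norm_num
    _ = 2 ^ d := by exact_mod_cast Nat.sum_range_choose d

theorem bind₁_undot_Mpoly {V : Type*} [Fintype V] [DecidableEq V] (G : SimpleGraph V)
    [DecidableRel G.Adj] {m : V → ℕ × ℕ} (hzero : ∀ x, (m x).2 = 0) :
    bind₁ undot (Mpoly G m) = ∑ A ∈ G.edgeFinset.powerset,
      ∏ c : (SimpleGraph.fromEdgeSet (A : Set (Sym2 V))).ConnectedComponent,
        undot (∑ᶠ x ∈ c.supp, (m x).1, Nat.card c.supp - 1) := by
  simp only [Mpoly, map_sum, finprod_eq_prod_of_fintype, map_prod, bind₁_X_right, hzero,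
    finsum_zero, zero_add]

theorem hasAlternatingSigns_bind₁_undot_Mpoly {V : Type*} [Fintype V] [DecidableEq V]
    (G : SimpleGraph V) [DecidableRel G.Adj] {m : V → ℕ × ℕ} (hzero : ∀ x, (m x).2 = 0)
    (hstrict : ∀ x, 1 < (m x).1) : HasAlternatingSigns (1, 0) (bind₁ undot (Mpoly G m)) := by
  rw [bind₁_undot_Mpoly G hzero]
  exact .sum fun A _ => .prod fun c _ =>
    undot_hasAlternatingSigns (c.card_supp_sub_one_add_one_lt_finsum hstrict)

theorem aeval_bind₁_undot_Mpoly {V : Type*} [Fintype V] [DecidableEq V] {G : SimpleGraph V}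
    [DecidableRel G.Adj] (hG : G.IsAcyclic) {m : V → ℕ × ℕ} (hzero : ∀ x, (m x).2 = 0)
    (hstrict : ∀ x, 1 < (m x).1) :
    aeval (Pi.mulSingle (1, 0) (-1 : ℚ)) (bind₁ undot (Mpoly G m)) = 3 ^ #G.edgeFinset := by
  rw [bind₁_undot_Mpoly G hzero, map_sum]
  calc _ = ∑ A ∈ G.edgeFinset.powerset, (2 : ℚ) ^ #A := by
        refine sum_congr rfl fun A hA => ?_
        have hA' : (A : Set (Sym2 V)) ⊆ G.edgeSet := by
          simpa [← SimpleGraph.coe_edgeFinset] using mem_powerset.mp hA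
        rw [map_prod, prod_congr rfl fun c _ =>
            aeval_undot (c.card_supp_sub_one_add_one_lt_finsum hstrict),
          prod_pow_eq_pow_sum, hG.sum_card_supp_sub_one_fromEdgeSet hA']
    _ = 3 ^ #G.edgeFinset := by
        simpa [two_add_one_eq_three] using sum_pow_mul_eq_add_pow (2 : ℚ) 1 G.edgeFinset

/-- For a strictly weighted tree on `n` vertices (all marks `(w,0)` with
`w > 1`), the undotting substitution applied to the states-model expansion of
the `M`-polynomial yields an expression with `3^{n-1}` monomials counted with
multiplicity and no cancellations: the sum of the absolute values of the
coefficients of the resulting polynomial is `3^{n-1}`, and every monomial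
containing `z_{(1,0)}^ℓ` has sign `(-1)^ℓ`. -/
theorem Mpoly_undot_cancellationFree {V : Type*} [Fintype V] [DecidableEq V]
    (G : SimpleGraph V) [DecidableRel G.Adj] (hG : G.IsTree)
    (m : V → ℕ × ℕ) (hzero : ∀ x, (m x).2 = 0) (hstrict : ∀ x, 1 < (m x).1) :
    (∑ μ ∈ ((bind₁ undot) (Mpoly G m)).support,
        |((bind₁ undot) (Mpoly G m)).coeff μ|) = 3 ^ (Fintype.card V - 1) ∧
    ∀ μ ∈ ((bind₁ undot) (Mpoly G m)).support,
      0 < (-1 : ℚ) ^ (μ (1, 0)) * ((bind₁ undot) (Mpoly G m)).coeff μ := by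
  have halt := hasAlternatingSigns_bind₁_undot_Mpoly G hzero hstrict
  refine ⟨?_, fun μ hμ => halt.pos_of_mem_support hμ⟩
  rw [halt.sum_abs_coeff_eq_aeval, aeval_bind₁_undot_Mpoly hG.isAcyclic hzero hstrict,
    ← hG.card_edgeFinset, Nat.add_sub_cancel]
end
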